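/- arXiv:1408.0382 — 3 statements merged into one kernel-verified Lean document; each statement's English description precedes it below -/
import Mathlib

section
/- Let K : [0,∞) → ℂ be a bounded continuous function and let U ⊆ ℂ be a connected open set containing the open right half-plane {λ : Re λ > 0}. Let G : U → ℂ be holomorphic with G(λ) = ∫₀^∞ K(t)·exp(−λt) dt for all λ with Re λ > 0. Let a ∈ ℝ, let θ : [0,∞) → ℂ be continuously differentiable with compact support, let g : [0,∞) → ℂ be continuous with compact support, and suppose θ′(t) + a·(K ∗ θ)(t) = g(t) for all t ≥ 0, where (K ∗ θ)(t) = ∫₀^t K(t−s)·θ(s) ds. If λ* ∈ U satisfies λ* + a·G(λ*) = 0, then ĝ(λ*) + θ(0) = 0, where ĝ(λ) = ∫₀^∞ g(t)·exp(−λt) dt (an entire function of λ, since g has compact support). -/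
/-!
Taking Laplace transforms of `θ' + a (K ∗ θ) = g` at `Re λ > 0` (integration by parts for `θ'`,
the convolution theorem for `K ∗ θ`) gives `ĝ(λ) + θ(0) = (λ + a K̂(λ)) θ̂(λ)`. As `θ` and `g`
vanish for large `t`, `θ̂` and `ĝ` are entire, so with `G` in place of `K̂` both sides are
holomorphic on `U`; by the identity theorem they agree on the connected set `U`, and at a root
`λ*` of `λ + a G(λ)` the right-hand side vanishes.
-/

open MeasureTheory Set Filter Topology Complex

noncomputable def laplaceTransform (f : ℝ → ℂ) (l : ℂ) : ℂ :=
  ∫ t in Ioi (0:ℝ), f t * cexp (-(l * t))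

section EventuallyZero

variable {E : Type*} [NormedAddCommGroup E] {F : ℝ → E} {a S : ℝ}

theorem setIntegral_Ioi_eq_Ioc_of_forall_ge_eq_zero [NormedSpace ℝ E]
    (h0 : ∀ t, S ≤ t → F t = 0) : ∫ t in Ioi a, F t = ∫ t in Ioc a S, F t :=
  setIntegral_eq_of_subset_of_forall_sdiff_eq_zero measurableSet_Ioi Ioc_subset_Ioi_self
    fun t ht => h0 t (not_le.1 fun h => ht.2 ⟨ht.1, h⟩).le

theorem Continuous.integrableOn_Ioi_of_forall_ge_eq_zero (hF : Continuous F)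
    (h0 : ∀ t, S ≤ t → F t = 0) : IntegrableOn F (Ioi a) :=
  hF.integrableOn_Ioc.of_forall_sdiff_eq_zero measurableSet_Ioi
    fun t ht => h0 t (not_le.1 fun h => ht.2 ⟨ht.1, h⟩).le

theorem deriv_eq_zero_of_forall_ge_eq_zero [NormedSpace ℝ E] (h0 : ∀ t, S ≤ t → F t = 0)
    {t : ℝ} (ht : S < t) : deriv F t = 0 := by
  have hF : F =ᶠ[𝓝 t] fun _ => 0 := eventually_of_mem (Ioi_mem_nhds ht) fun s hs => h0 s hs.le
  rw [hF.deriv_eq, deriv_const]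

end EventuallyZero

theorem differentiable_integral_mul_cexp {μ : Measure ℝ} {f : ℝ → ℂ} (hf : Integrable f μ)
    {R : ℝ} (hR : ∀ᵐ t ∂μ, |t| ≤ R) :
    Differentiable ℂ fun l : ℂ => ∫ t, f t * cexp (-(l * t)) ∂μ := by
  intro l₀
  have hexp : ∀ l : ℂ, Continuous fun t : ℝ => cexp (-(l * t)) := by fun_prop
  have hnorm : ∀ l : ℂ, ∀ t : ℝ, |t| ≤ R → ‖cexp (-(l * t))‖ ≤ Real.exp (‖l‖ * R) :=
    fun l t ht => (norm_exp_le_exp_norm _).trans <| Real.exp_le_exp.2 <| by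
      rw [norm_neg, norm_mul, norm_real, Real.norm_eq_abs]
      exact mul_le_mul_of_nonneg_left ht (norm_nonneg l)
  have hderiv : ∀ l : ℂ, ∀ t : ℝ, HasDerivAt (fun l : ℂ => f t * cexp (-(l * t)))
      (f t * (cexp (-(l * t)) * -t)) l := fun l t =>
    (((hasDerivAt_id l).mul_const (t : ℂ)).neg.cexp).const_mul (f t) |>.congr_deriv (by simp)
  refine (hasDerivAt_integral_of_dominated_loc_of_deriv_le (Metric.ball_mem_nhds l₀ one_pos)
    (bound := fun t => ‖f t‖ * (Real.exp ((‖l₀‖ + 1) * R) * R))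
    (Eventually.of_forall fun l => hf.aestronglyMeasurable.mul (hexp l).aestronglyMeasurable)
    (hf.mul_bdd (hexp l₀).aestronglyMeasurable (hR.mono fun t ht => hnorm l₀ t ht))
    (hf.aestronglyMeasurable.mul
      (by fun_prop : Continuous fun t : ℝ => cexp (-(l₀ * t)) * -t).aestronglyMeasurable)
    (hR.mono fun t ht l hball => ?_) (hf.norm.mul_const _)
    (Eventually.of_forall fun t l _ => hderiv l t)).2.differentiableAt
  have hl : ‖l‖ ≤ ‖l₀‖ + 1 :=
    (norm_le_norm_add_norm_sub' l l₀).trans (by linarith [mem_ball_iff_norm.1 hball])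
  have hR0 : 0 ≤ R := (abs_nonneg t).trans ht
  rw [norm_mul, norm_mul, norm_neg, norm_real, Real.norm_eq_abs]
  gcongr
  exact (hnorm l t ht).trans (Real.exp_le_exp.2 (by gcongr))

theorem differentiable_laplaceTransform {f : ℝ → ℂ} (hf : Continuous f) {S : ℝ}
    (h0 : ∀ t, S ≤ t → f t = 0) : Differentiable ℂ (laplaceTransform f) := by
  have hIoc : laplaceTransform f = fun l : ℂ => ∫ t in Ioc 0 S, f t * cexp (-(l * t)) := by
    ext l
    exact setIntegral_Ioi_eq_Ioc_of_forall_ge_eq_zero fun t ht => by rw [h0 t ht, zero_mul]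
  rw [hIoc]
  refine differentiable_integral_mul_cexp (R := S) hf.integrableOn_Ioc ?_
  exact (ae_restrict_iff' measurableSet_Ioc).2 (Eventually.of_forall fun t ht => by
    rw [abs_of_pos ht.1]; exact ht.2)

theorem laplaceTransform_deriv {θ : ℝ → ℂ} (hθ : ContDiff ℝ 1 θ) {S : ℝ}
    (h0 : ∀ t, S ≤ t → θ t = 0) (l : ℂ) :
    laplaceTransform (deriv θ) l = l * laplaceTransform θ l - θ 0 := by
  have hexp : ∀ t : ℝ, HasDerivAt (fun t : ℝ => cexp (-(l * t))) (cexp (-(l * t)) * -l) t :=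
    fun t => (((hasDerivAt_id (t : ℂ)).const_mul l).neg.cexp.comp_ofReal).congr_deriv (by simp)
  have hexp_cont : Continuous fun t : ℝ => cexp (-(l * t)) := by fun_prop
  have hparts := integral_Ioi_mul_deriv_eq_deriv_mul (a := 0) (a' := θ 0) (b' := 0)
    (fun t _ => hexp t) (fun t _ => (hθ.differentiable one_ne_zero t).hasDerivAt)
    ((hexp_cont.mul (hθ.continuous_deriv le_rfl)).integrableOn_Ioi_of_forall_ge_eq_zero
      (S := S + 1) fun t ht => by
        rw [Pi.mul_apply, deriv_eq_zero_of_forall_ge_eq_zero h0 (by linarith), mul_zero])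
    (((hexp_cont.mul continuous_const).mul hθ.continuous).integrableOn_Ioi_of_forall_ge_eq_zero
      fun t ht => by rw [Pi.mul_apply, h0 t ht, mul_zero])
    (by simpa using ((hexp_cont.mul hθ.continuous).tendsto 0).mono_left nhdsWithin_le_nhds)
    (tendsto_const_nhds.congr' ((eventually_ge_atTop S).mono fun t ht => by
      rw [Pi.mul_apply, h0 t ht, mul_zero]))
  have hmul : ∀ t : ℝ, cexp (-(l * t)) * -l * θ t = -l * (θ t * cexp (-(l * t))) :=
    fun t => by ring
  simp only [laplaceTransform, mul_comm (deriv θ _), hparts, hmul, integral_const_mul]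
  ring

/-- Since `e^{-λs} e^{-λ(t-s)} = e^{-λt}`, the Laplace integrand of `K ∗ θ`, extended by zero
to `ℝ`, is the convolution of those of `θ` and `K`. -/
theorem convolution_indicator_mul_cexp (K θ : ℝ → ℂ) (l : ℂ) (t : ℝ) :
    convolution ((Ioi (0:ℝ)).indicator fun s => θ s * cexp (-(l * s)))
        ((Ioi (0:ℝ)).indicator fun s => K s * cexp (-(l * s))) (ContinuousLinearMap.mul ℂ ℂ)
        volume t
      = (Ioi (0:ℝ)).indicator
          (fun t => (∫ s in (0:ℝ)..t, K (t - s) * θ s) * cexp (-(l * t))) t := by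
  have hintegrand : ∀ s, ((Ioi (0:ℝ)).indicator (fun s => θ s * cexp (-(l * s))) s)
      * (Ioi (0:ℝ)).indicator (fun s => K s * cexp (-(l * s))) (t - s)
      = (Ioo 0 t).indicator (fun s => K (t - s) * θ s * cexp (-(l * t))) s := by
    intro s
    by_cases hs : s ∈ Ioo 0 t
    · rw [indicator_of_mem hs, indicator_of_mem (mem_Ioi.2 hs.1),
        indicator_of_mem (mem_Ioi.2 (sub_pos.2 hs.2))]
      have : -(l * t) = -(l * s) + -(l * ↑(t - s)) := by push_cast; ring
      rw [this, Complex.exp_add]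
      ring
    · rw [indicator_of_notMem hs]
      rcases le_or_gt s 0 with h | h
      · rw [indicator_of_notMem (show s ∉ Ioi 0 from not_lt.2 h), zero_mul]
      · rw [indicator_of_notMem (show t - s ∉ Ioi 0 from fun h' => hs ⟨h, sub_pos.1 h'⟩),
          mul_zero]
  simp only [convolution_def, ContinuousLinearMap.mul_apply', hintegrand]
  rw [integral_indicator measurableSet_Ioo, integral_mul_const]
  rcases le_or_gt t 0 with ht | ht
  · rw [indicator_of_notMem (show t ∉ Ioi 0 from not_lt.2 ht), Ioo_eq_empty (not_lt.2 ht),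
      Measure.restrict_empty, integral_zero_measure, zero_mul]
  · rw [indicator_of_mem (mem_Ioi.2 ht), intervalIntegral.integral_of_le ht.le,
      integral_Ioc_eq_integral_Ioo]

theorem laplaceTransform_convolution {K θ : ℝ → ℂ} {l : ℂ}
    (hK : IntegrableOn (fun t => K t * cexp (-(l * t))) (Ioi 0))
    (hθ : IntegrableOn (fun t => θ t * cexp (-(l * t))) (Ioi 0)) :
    laplaceTransform (fun t => ∫ s in (0:ℝ)..t, K (t - s) * θ s) l
      = laplaceTransform K l * laplaceTransform θ l := by
  simp only [laplaceTransform, ← integral_indicator measurableSet_Ioi,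
    ← convolution_indicator_mul_cexp]
  rw [integral_convolution _ ((integrable_indicator_iff measurableSet_Ioi).2 hθ)
    ((integrable_indicator_iff measurableSet_Ioi).2 hK), ContinuousLinearMap.mul_apply', mul_comm]

theorem integrableOn_Ioi_mul_cexp_of_norm_le {K : ℝ → ℂ} (hKc : ContinuousOn K (Ici 0))
    {M : ℝ} (hKb : ∀ t, 0 ≤ t → ‖K t‖ ≤ M) {l : ℂ} (hl : 0 < l.re) :
    IntegrableOn (fun t => K t * cexp (-(l * t))) (Ioi 0) := by
  refine Integrable.mono' ((exp_neg_integrableOn_Ioi 0 hl).const_mul M)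
    (((hKc.mono Ioi_subset_Ici_self).aestronglyMeasurable measurableSet_Ioi).mul
      (by fun_prop : Continuous fun t : ℝ => cexp (-(l * t))).aestronglyMeasurable)
    ((ae_restrict_iff' measurableSet_Ioi).2 (Eventually.of_forall fun t ht => ?_))
  rw [norm_mul, Complex.norm_exp]
  have hre : (-(l * t)).re = -l.re * t := by simp
  rw [hre]
  exact mul_le_mul_of_nonneg_right (hKb t (le_of_lt ht)) (Real.exp_pos _).le

theorem laplaceTransform_eq_of_deriv_add_convolution_eq {K θ g : ℝ → ℂ} {a l : ℂ}
    (hK : IntegrableOn (fun t => K t * cexp (-(l * t))) (Ioi 0))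
    (hθ : ContDiff ℝ 1 θ) {Sθ : ℝ} (hθ0 : ∀ t, Sθ ≤ t → θ t = 0)
    (hg : Continuous g) {Sg : ℝ} (hg0 : ∀ t, Sg ≤ t → g t = 0)
    (heq : ∀ t : ℝ, 0 ≤ t → deriv θ t + a * ∫ s in (0:ℝ)..t, K (t - s) * θ s = g t) :
    laplaceTransform g l + θ 0 = (l + a * laplaceTransform K l) * laplaceTransform θ l := by
  have hexp : Continuous fun t : ℝ => cexp (-(l * t)) := by fun_prop
  have hθint : IntegrableOn (fun t => θ t * cexp (-(l * t))) (Ioi 0) :=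
    (hθ.continuous.mul hexp).integrableOn_Ioi_of_forall_ge_eq_zero fun t ht => by
      rw [Pi.mul_apply, hθ0 t ht, zero_mul]
  have hθ'int : IntegrableOn (fun t => deriv θ t * cexp (-(l * t))) (Ioi 0) :=
    ((hθ.continuous_deriv le_rfl).mul hexp).integrableOn_Ioi_of_forall_ge_eq_zero (S := Sθ + 1)
      fun t ht => by rw [deriv_eq_zero_of_forall_ge_eq_zero hθ0 (by linarith), zero_mul]
  have hgint : IntegrableOn (fun t => g t * cexp (-(l * t))) (Ioi 0) :=
    (hg.mul hexp).integrableOn_Ioi_of_forall_ge_eq_zero fun t ht => by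
      rw [Pi.mul_apply, hg0 t ht, zero_mul]
  have hsplit : ∀ t ∈ Ioi (0:ℝ), g t * cexp (-(l * t)) = deriv θ t * cexp (-(l * t))
      + a * ((∫ s in (0:ℝ)..t, K (t - s) * θ s) * cexp (-(l * t))) := fun t ht => by
    rw [← heq t (le_of_lt ht)]; ring
  -- the convolution term is integrable as the difference of the other two
  have hconvint : IntegrableOn
      (fun t => a * ((∫ s in (0:ℝ)..t, K (t - s) * θ s) * cexp (-(l * t)))) (Ioi 0) :=
    (hgint.sub hθ'int).congr_fun (fun t ht => by simp only [Pi.sub_apply, hsplit t ht]; ring)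
      measurableSet_Ioi
  have hg_hat : laplaceTransform g l = laplaceTransform (deriv θ) l
      + a * laplaceTransform (fun t => ∫ s in (0:ℝ)..t, K (t - s) * θ s) l := by
    rw [laplaceTransform, setIntegral_congr_fun measurableSet_Ioi hsplit,
      integral_add hθ'int hconvint, integral_const_mul]
    rfl
  rw [hg_hat, laplaceTransform_deriv hθ hθ0, laplaceTransform_convolution hK hθint]
  ring

/-- Moment condition at a root of the characteristic function: if `G` is a holomorphic
continuation of the Laplace transform of `K` to a connected open set `U` containing the
right half-plane, `θ' + a (K ∗ θ) = g` with `θ, g` compactly supported, and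
`λ* + a G(λ*) = 0` for some `λ* ∈ U`, then `ĝ(λ*) + θ(0) = 0`. -/
theorem moment_condition_at_characteristic_root (K : ℝ → ℂ)
    (hKc : ContinuousOn K (Set.Ici 0))
    (hKb : ∃ M : ℝ, ∀ t : ℝ, 0 ≤ t → ‖K t‖ ≤ M)
    (U : Set ℂ) (hUopen : IsOpen U) (hUconn : IsConnected U)
    (hUsub : {l : ℂ | 0 < l.re} ⊆ U)
    (G : ℂ → ℂ) (hG : DifferentiableOn ℂ G U)
    (hGeq : ∀ l : ℂ, 0 < l.re →
      G l = ∫ t in Set.Ioi (0:ℝ), K t * Complex.exp (-(l * t)))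
    (a : ℝ) (θ g : ℝ → ℂ)
    (hθ : ContDiff ℝ 1 θ) (hθsupp : ∃ S : ℝ, ∀ t : ℝ, S ≤ t → θ t = 0)
    (hg : Continuous g) (hgsupp : ∃ S : ℝ, ∀ t : ℝ, S ≤ t → g t = 0)
    (heq : ∀ t : ℝ, 0 ≤ t →
      deriv θ t + (a : ℂ) * ∫ s in (0:ℝ)..t, K (t - s) * θ s = g t)
    (lstar : ℂ) (hmem : lstar ∈ U) (hroot : lstar + (a : ℂ) * G lstar = 0) :
    (∫ t in Set.Ioi (0:ℝ), g t * Complex.exp (-(lstar * t))) + θ 0 = 0 := by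
  obtain ⟨M, hM⟩ := hKb
  obtain ⟨Sθ, hθ0⟩ := hθsupp
  obtain ⟨Sg, hg0⟩ := hgsupp
  have hLHS : AnalyticOnNhd ℂ (fun l => laplaceTransform g l + θ 0) U :=
    ((differentiable_laplaceTransform hg hg0).differentiableOn.add_const _).analyticOnNhd hUopen
  have hRHS : AnalyticOnNhd ℂ (fun l => (l + a * G l) * laplaceTransform θ l) U :=
    ((differentiableOn_id.add (hG.const_mul _)).mul
      (differentiable_laplaceTransform hθ.continuous hθ0).differentiableOn).analyticOnNhd hUopen
  have hhalf : IsOpen {l : ℂ | 0 < l.re} := isOpen_lt continuous_const continuous_re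
  have hone : (1 : ℂ) ∈ {l : ℂ | 0 < l.re} := by simp
  have hagree : (fun l => laplaceTransform g l + θ 0) =ᶠ[𝓝 1]
      fun l => (l + a * G l) * laplaceTransform θ l := by
    filter_upwards [hhalf.mem_nhds hone] with l hl
    rw [hGeq l hl]
    exact laplaceTransform_eq_of_deriv_add_convolution_eq
      (integrableOn_Ioi_mul_cexp_of_norm_le hKc hM hl) hθ hθ0 hg hg0 heq
  have hstar := hLHS.eqOn_of_preconnected_of_eventuallyEq hRHS hUconn.isPreconnected
    (hUsub hone) hagree hmem
  simp only [hroot, zero_mul] at hstar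
  exact hstar
end

section
/- Let λ₀ ∈ ℂ, r > 0, and let f be holomorphic on the open ball B(λ₀, r) with f(λ₀) = 0 and f not identically zero on B(λ₀, r). Let (a_n) be a sequence of positive real numbers with a_n → +∞. Then there exists a sequence (λ_n) in B(λ₀, r) with λ_n + a_n·f(λ_n) = 0 for all sufficiently large n and λ_n → λ₀. Moreover, if λ₀ ≠ 0, then λ_n ≠ 0 for all sufficiently large n. -/
open Filter Metric

lemma exists_zero_aux (l₀ : ℂ) (hl₀ : l₀ ≠ 0) (ε : ℝ) (hε : 0 < ε)
    (f : ℂ → ℂ) (hfd : ∀ z ∈ closedBall l₀ ε, DifferentiableAt ℂ f z)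
    (hf0 : f l₀ = 0) (m : ℝ) (hm : 0 < m)
    (hmf : ∀ z ∈ sphere l₀ ε, m ≤ ‖f z‖)
    (a : ℝ) (ha : 0 < a) (hbig : 2 * ‖l₀‖ + ε < a * m) :
    ∃ z ∈ ball l₀ ε, z + (a : ℂ) * f z = 0 := by
  by_contra hno
  push_neg at hno
  set g : ℂ → ℂ := fun z => z + (a : ℂ) * f z with hg
  have hl₀n : 0 < ‖l₀‖ := norm_pos_iff.mpr hl₀
  have hkey : ‖l₀‖ < a * m - (‖l₀‖ + ε) := by linarith
  have hsph : ∀ z ∈ sphere l₀ ε, a * m - (‖l₀‖ + ε) ≤ ‖g z‖ := by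
    intro z hz
    have hz' : ‖z - l₀‖ = ε := mem_sphere_iff_norm.mp hz
    have hzn : ‖z‖ ≤ ‖l₀‖ + ε := by
      calc ‖z‖ = ‖l₀ + (z - l₀)‖ := by ring_nf
        _ ≤ ‖l₀‖ + ‖z - l₀‖ := norm_add_le _ _
        _ = ‖l₀‖ + ε := by rw [hz']
    have hfm : a * m ≤ ‖(a : ℂ) * f z‖ := by
      rw [norm_mul, Complex.norm_real, Real.norm_of_nonneg ha.le]
      exact mul_le_mul_of_nonneg_left (hmf z hz) ha.le
    have : ‖(a : ℂ) * f z‖ - ‖z‖ ≤ ‖g z‖ := by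
      have := norm_add_le (g z) (-z)
      simp only [hg] at this ⊢
      have h2 : ‖(a : ℂ) * f z‖ ≤ ‖z + (a : ℂ) * f z‖ + ‖z‖ := by
        calc ‖(a : ℂ) * f z‖ = ‖(z + (a : ℂ) * f z) - z‖ := by ring_nf
          _ ≤ ‖z + (a : ℂ) * f z‖ + ‖z‖ := norm_sub_le _ _
      linarith
    linarith
  have hcb : ∀ z ∈ closedBall l₀ ε, g z ≠ 0 := by
    intro z hz
    rcases lt_or_eq_of_le (mem_closedBall.mp hz) with h | h
    · exact hno z (mem_ball.mpr h)
    · have := hsph z (mem_sphere.mpr h)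
      intro h0
      rw [h0, norm_zero] at this
      linarith
  have hgd : ∀ z ∈ closedBall l₀ ε, DifferentiableAt ℂ (fun w => (g w)⁻¹) z := by
    intro z hz
    exact (differentiableAt_id.add ((hfd z hz).const_mul _)).inv (hcb z hz)
  have hcl : closure (ball l₀ ε) = closedBall l₀ ε := closure_ball l₀ hε.ne'
  have hfr : frontier (ball l₀ ε) = sphere l₀ ε := frontier_ball l₀ hε.ne'
  have hdcc : DiffContOnCl ℂ (fun w => (g w)⁻¹) (ball l₀ ε) := by
    constructor
    · exact fun z hz => (hgd z (ball_subset_closedBall hz)).differentiableWithinAt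
    · rw [hcl]
      exact fun z hz => (hgd z hz).continuousAt.continuousWithinAt
  set C : ℝ := (a * m - (‖l₀‖ + ε))⁻¹ with hC
  have hpos : 0 < a * m - (‖l₀‖ + ε) := lt_trans hl₀n hkey
  have hbd : ∀ z ∈ frontier (ball l₀ ε), ‖(g z)⁻¹‖ ≤ C := by
    intro z hz
    rw [hfr] at hz
    rw [norm_inv]
    exact inv_anti₀ hpos (hsph z hz)
  have hmem : l₀ ∈ closure (ball l₀ ε) := by
    rw [hcl]; exact mem_closedBall_self hε.le
  have := Complex.norm_le_of_forall_mem_frontier_norm_le isBounded_ball hdcc hbd hmem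
  have hgl : g l₀ = l₀ := by simp [hg, hf0]
  rw [hgl, norm_inv] at this
  rw [hC] at this
  have hfin : a * m - (‖l₀‖ + ε) ≤ ‖l₀‖ := (inv_le_inv₀ hl₀n hpos).mp this
  linarith

/-- Rouché-type lemma: if `f` is holomorphic on `B(λ₀, r)`, vanishes at `λ₀` but is not
identically zero, and `a_n → +∞` are positive reals, then there are zeros `λ_n` of
`λ + a_n f(λ)` in `B(λ₀, r)` (for large `n`) with `λ_n → λ₀`; if moreover `λ₀ ≠ 0`,
then `λ_n ≠ 0` for all sufficiently large `n`. -/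
theorem zeros_of_perturbed_characteristic_functions (l₀ : ℂ) (r : ℝ) (hr : 0 < r)
    (f : ℂ → ℂ) (hf : DifferentiableOn ℂ f (Metric.ball l₀ r))
    (hf0 : f l₀ = 0) (hfne : ¬ ∀ z ∈ Metric.ball l₀ r, f z = 0)
    (a : ℕ → ℝ) (ha : ∀ n, 0 < a n) (hatop : Tendsto a atTop atTop) :
    ∃ l : ℕ → ℂ, (∀ n, l n ∈ Metric.ball l₀ r) ∧
      (∀ᶠ n in atTop, l n + (a n : ℂ) * f (l n) = 0) ∧
      Tendsto l atTop (nhds l₀) ∧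
      (l₀ ≠ 0 → ∀ᶠ n in atTop, l n ≠ 0) := by
  by_cases hl₀ : l₀ = 0
  · refine ⟨fun _ => l₀, fun n => mem_ball_self hr, ?_, tendsto_const_nhds, fun h => absurd hl₀ h⟩
    filter_upwards with n
    rw [hf0, hl₀]; ring
  -- l₀ ≠ 0 case
  have hmem : l₀ ∈ ball l₀ r := mem_ball_self hr
  have hfa : AnalyticAt ℂ f l₀ := hf.analyticAt (isOpen_ball.mem_nhds hmem)
  -- isolated zero
  have hiso : ∀ᶠ z in nhdsWithin l₀ {l₀}ᶜ, f z ≠ 0 := by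
    rcases hfa.eventually_eq_zero_or_eventually_ne_zero with h | h
    · exfalso
      apply hfne
      have hA : AnalyticOnNhd ℂ f (ball l₀ r) := hf.analyticOnNhd isOpen_ball
      have := hA.eqOn_zero_of_preconnected_of_eventuallyEq_zero
        (convex_ball l₀ r).isPreconnected hmem h
      exact fun z hz => this hz
    · exact h
  rw [eventually_nhdsWithin_iff, Metric.eventually_nhds_iff] at hiso
  obtain ⟨δ, hδ, hδf⟩ := hiso
  set ρ : ℝ := min (δ / 2) (r / 2) with hρdef
  have hρ : 0 < ρ := lt_min (by linarith) (by linarith)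
  have hρδ : ρ < δ := lt_of_le_of_lt (min_le_left _ _) (by linarith)
  have hρr : ρ < r := lt_of_le_of_lt (min_le_right _ _) (by linarith)
  -- for each ε ≤ ρ, eventually there is a zero in ball l₀ ε
  have hkey : ∀ ε : ℝ, 0 < ε → ε ≤ ρ → ∀ᶠ n in atTop,
      ∃ z ∈ ball l₀ ε, z + (a n : ℂ) * f z = 0 := by
    intro ε hε hερ
    have hsub : closedBall l₀ ε ⊆ ball l₀ r := fun z hz =>
      mem_ball.mpr (lt_of_le_of_lt (mem_closedBall.mp hz) (lt_of_le_of_lt hερ hρr))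
    have hfd : ∀ z ∈ closedBall l₀ ε, DifferentiableAt ℂ f z := fun z hz =>
      (hf.differentiableAt (isOpen_ball.mem_nhds (hsub hz)))
    -- min of ‖f‖ on sphere
    have hsphne : (sphere l₀ ε).Nonempty := NormedSpace.sphere_nonempty.mpr hε.le
    have hsphc : IsCompact (sphere l₀ ε) := isCompact_sphere l₀ ε
    have hcont : ContinuousOn (fun z => ‖f z‖) (sphere l₀ ε) := by
      apply ContinuousOn.norm
      exact fun z hz => (hfd z (sphere_subset_closedBall hz)).continuousAt.continuousWithinAt
    obtain ⟨z₀, hz₀, hz₀min⟩ := hsphc.exists_isMinOn hsphne hcont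
    set m : ℝ := ‖f z₀‖ with hmdef
    have hm : 0 < m := by
      apply norm_pos_iff.mpr
      have hd : dist z₀ l₀ < δ := by
        calc dist z₀ l₀ = ε := mem_sphere.mp hz₀
          _ < δ := lt_of_le_of_lt hερ hρδ
      have hne : z₀ ∈ ({l₀}ᶜ : Set ℂ) := by
        intro h0
        have h1 := mem_sphere.mp hz₀
        rw [Set.mem_singleton_iff.mp h0, dist_self] at h1
        exact hε.ne h1
      exact hδf hd hne
    have hmf : ∀ z ∈ sphere l₀ ε, m ≤ ‖f z‖ := fun z hz => hz₀min hz
    have hev : ∀ᶠ n in atTop, (2 * ‖l₀‖ + ε) / m < a n :=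
      hatop.eventually_gt_atTop _
    filter_upwards [hev] with n hn
    have hbig : 2 * ‖l₀‖ + ε < a n * m := by
      rw [div_lt_iff₀ hm] at hn
      linarith
    exact exists_zero_aux l₀ hl₀ ε hε f hfd hf0 m hm hmf (a n) (ha n) hbig
  -- extraction
  have hP : ∀ k : ℕ, ∀ᶠ N in atTop, ∀ n ≥ N,
      ∃ z ∈ ball l₀ (ρ / (k + 1)), z + (a n : ℂ) * f z = 0 := by
    intro k
    have hεk : 0 < ρ / (k + 1) := div_pos hρ (by positivity)
    have hεk' : ρ / (k + 1) ≤ ρ := by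
      rw [div_le_iff₀ (by positivity : (0:ℝ) < (k:ℝ) + 1)]
      nlinarith [hρ.le, Nat.cast_nonneg (α := ℝ) k]
    obtain ⟨N, hN⟩ := eventually_atTop.mp (hkey _ hεk hεk')
    rw [eventually_atTop]
    exact ⟨N, fun M hM n hn => hN n (le_trans hM hn)⟩
  obtain ⟨φ, hφmono, hφ⟩ := extraction_forall_of_eventually hP
  set c : ℕ → ℕ := fun n => Nat.findGreatest (fun k => φ k ≤ n) n with hcdef
  have hφc : ∀ n, φ 0 ≤ n → φ (c n) ≤ n := by
    intro n hn
    rcases Nat.eq_zero_or_pos (c n) with h | h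
    · rw [h]; exact hn
    · have heq : Nat.findGreatest (fun k => φ k ≤ n) n = c n := rfl
      exact (Nat.findGreatest_eq_iff.mp heq).2.1 h.ne'
  have hctop : Tendsto c atTop atTop := by
    rw [tendsto_atTop_atTop]
    intro K
    refine ⟨max (φ K) K, fun n hn => ?_⟩
    exact Nat.le_findGreatest (le_trans (le_max_right _ _) hn)
      (le_trans (le_max_left _ _) hn)
  classical
  set Q : ℕ → ℂ → Prop := fun n z => z ∈ ball l₀ (ρ / (c n + 1)) ∧
    z + (a n : ℂ) * f z = 0 with hQdef
  have hQ : ∀ n, φ 0 ≤ n → ∃ z, Q n z := by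
    intro n hn
    obtain ⟨z, hz1, hz2⟩ := hφ (c n) n (hφc n hn)
    exact ⟨z, hz1, hz2⟩
  set l : ℕ → ℂ := fun n => if h : ∃ z, Q n z then h.choose else l₀ with hldef
  have hcρ : ∀ n, ρ / (c n + 1) ≤ ρ := by
    intro n
    apply div_le_self hρ.le
    have : (0:ℝ) ≤ (c n : ℝ) := Nat.cast_nonneg _
    linarith
  have hlball : ∀ n, l n ∈ ball l₀ r := by
    intro n
    by_cases h : ∃ z, Q n z
    · simp only [hldef, dif_pos h]
      have h1 := h.choose_spec.1
      exact mem_ball.mpr (lt_of_lt_of_le (mem_ball.mp h1) (le_trans (hcρ n) hρr.le))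
    · simp only [hldef, dif_neg h]
      exact mem_ball_self hr
  have heqn : ∀ᶠ n in atTop, l n + (a n : ℂ) * f (l n) = 0 := by
    filter_upwards [eventually_ge_atTop (φ 0)] with n hn
    have h := hQ n hn
    simp only [hldef, dif_pos h]
    exact h.choose_spec.2
  have hdist : ∀ᶠ n in atTop, dist (l n) l₀ ≤ ρ / (c n + 1) := by
    filter_upwards [eventually_ge_atTop (φ 0)] with n hn
    have h := hQ n hn
    simp only [hldef, dif_pos h]
    exact (mem_ball.mp h.choose_spec.1).le
  have htend : Tendsto l atTop (nhds l₀) := by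
    rw [tendsto_iff_dist_tendsto_zero]
    apply squeeze_zero' (Eventually.of_forall fun n => dist_nonneg) hdist
    have h1 : Tendsto (fun k : ℕ => ρ / ((k : ℝ) + 1)) atTop (nhds 0) :=
      Tendsto.div_atTop tendsto_const_nhds
        (tendsto_atTop_add_const_right _ 1 tendsto_natCast_atTop_atTop)
    exact h1.comp hctop
  exact ⟨l, hlball, heqn, htend, fun h => htend.eventually_ne h⟩
end

section
/- Let (λ_n)_{n ≥ 1} be a sequence of pairwise distinct nonzero complex numbers converging to some λ* ∈ ℂ, and let (c_n)_{n ≥ 1} be complex numbers such that c_{2n+1} = 0 for every n and c_{2k} ≠ 0 for some k. Then there exist no T > 0 and no f ∈ L²(ℝ, ℂ) vanishing (almost everywhere) outside [0, T] such that ∫₀^T f(t)·exp(−λ_n·t) dt = c_n/λ_n for every n ≥ 1. -/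
/-!
The truncated Laplace transform `F z = ∫₀^T f t e^{-z t} dt` of an integrable `f` is entire
(differentiate under the integral; the kernel is uniformly bounded for `t ∈ [0, T]` and `z` in
a ball). The moment equations make `F` vanish at the pairwise distinct points `λ_{2n+1}`,
which accumulate at `λ*`, so `F ≡ 0` by the identity theorem; this contradicts
`F λ_{2k} = c_{2k} / λ_{2k} ≠ 0`.
-/

open MeasureTheory Filter Topology Function Set Interval

theorem abs_le_max_abs_abs_of_mem_uIcc {a b t : ℝ} (ht : t ∈ [[a, b]]) :
    |t| ≤ max |a| |b| := by
  rcases mem_uIcc.1 ht with h | h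
  · exact abs_le_max_abs_abs h.1 h.2
  · exact max_comm |b| |a| ▸ abs_le_max_abs_abs h.1 h.2

theorem norm_cexp_neg_mul_ofReal_le (z : ℂ) (t : ℝ) :
    ‖Complex.exp (-(z * t))‖ ≤ Real.exp (‖z‖ * |t|) := by
  rw [Complex.norm_exp, Real.exp_le_exp]
  calc (-(z * t)).re ≤ ‖-(z * t)‖ := Complex.re_le_norm _
    _ = ‖z‖ * |t| := by rw [norm_neg, norm_mul, Complex.norm_real, Real.norm_eq_abs]

theorem differentiable_intervalIntegral_mul_cexp_neg_mul {f : ℝ → ℂ} {a b : ℝ}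
    {μ : Measure ℝ} (hf : IntervalIntegrable f μ a b) :
    Differentiable ℂ fun z : ℂ => ∫ t in a..b, f t * Complex.exp (-(z * t)) ∂μ := by
  intro z
  set R := max |a| |b|
  set C := Real.exp ((‖z‖ + 1) * R)
  have habs {t : ℝ} (ht : t ∈ Ι a b) : |t| ≤ R :=
    abs_le_max_abs_abs_of_mem_uIcc (uIoc_subset_uIcc ht)
  have hexp_le {x : ℂ} (hx : x ∈ Metric.ball z 1) {t : ℝ} (ht : t ∈ Ι a b) :
      ‖Complex.exp (-(x * t))‖ ≤ C := by
    have hxz : ‖x‖ ≤ ‖z‖ + 1 := by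
      have := norm_le_norm_add_norm_sub' x z
      rw [mem_ball_iff_norm] at hx
      linarith
    refine (norm_cexp_neg_mul_ofReal_le x t).trans (Real.exp_le_exp.2 ?_)
    exact mul_le_mul hxz (habs ht) (abs_nonneg t) (by positivity)
  have hderiv (t : ℝ) (x : ℂ) : HasDerivAt (fun x : ℂ => f t * Complex.exp (-(x * t)))
      (f t * (-(t : ℂ) * Complex.exp (-(x * t)))) x := by
    have := ((hasDerivAt_id x).mul_const (t : ℂ)).neg.cexp.const_mul (f t)
    simpa [mul_comm, mul_left_comm, mul_assoc] using this
  refine (intervalIntegral.hasDerivAt_integral_of_dominated_loc_of_deriv_le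
    (bound := fun t => ‖f t‖ * (R * C)) (Metric.ball_mem_nhds z one_pos)
    (Eventually.of_forall fun x =>
      hf.def'.aestronglyMeasurable.mul (Continuous.aestronglyMeasurable (by fun_prop)))
    (hf.mul_continuousOn (by fun_prop))
    (hf.def'.aestronglyMeasurable.mul (Continuous.aestronglyMeasurable (by fun_prop)))
    ?_ (hf.norm.mul_const _) (Eventually.of_forall fun t _ x _ => hderiv t x)).2.differentiableAt
  refine Eventually.of_forall fun t ht x hx => ?_
  rw [norm_mul, norm_mul, norm_neg, Complex.norm_real, Real.norm_eq_abs]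
  gcongr
  exacts [habs ht, hexp_le hx ht]

theorem Differentiable.eq_zero_of_tendsto_of_injective {F : ℂ → ℂ} (hF : Differentiable ℂ F)
    {u : ℕ → ℂ} {a : ℂ} (hu : Injective u) (hlim : Tendsto u atTop (𝓝 a))
    (hzero : ∀ n, F (u n) = 0) : F = 0 := by
  have hne : ∀ᶠ n in atTop, u n ≠ a := by
    rw [← Nat.cofinite_eq_atTop]
    exact hu.tendsto_cofinite (finite_singleton a).compl_mem_cofinite
  have hfreq : ∃ᶠ z in 𝓝[≠] a, F z = 0 :=
    (tendsto_nhdsWithin_iff.2 ⟨hlim, hne⟩).frequently (Frequently.of_forall hzero)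
  funext z
  exact (hF.differentiableOn.analyticOnNhd isOpen_univ)
    |>.eqOn_zero_of_preconnected_of_frequently_eq_zero isPreconnected_univ
      (mem_univ a) hfreq (mem_univ z)

/-- Insolvability of the moment problem: if `(λ_n)_{n ≥ 1}` are pairwise distinct
nonzero complex numbers converging to some `λ*`, and `(c_n)` vanishes along the odd
indices but not along all even ones, then no compactly supported `L²` function `f` on
`[0, T]` satisfies `∫₀^T f(t) exp(-λ_n t) dt = c_n / λ_n` for all `n ≥ 1`. -/
theorem moment_problem_insolvable (l : ℕ → ℂ) (c : ℕ → ℂ) (lstar : ℂ)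
    (hne : ∀ n : ℕ, 1 ≤ n → l n ≠ 0)
    (hinj : ∀ m : ℕ, 1 ≤ m → ∀ n : ℕ, 1 ≤ n → l m = l n → m = n)
    (hlim : Tendsto l atTop (nhds lstar))
    (hodd : ∀ n : ℕ, c (2 * n + 1) = 0)
    (heven : ∃ k : ℕ, 1 ≤ k ∧ c (2 * k) ≠ 0) :
    ¬ ∃ (T : ℝ) (f : ℝ → ℂ), 0 < T ∧ MemLp f 2 volume ∧
        (∀ᵐ t : ℝ, t ∉ Set.Icc 0 T → f t = 0) ∧
        ∀ n : ℕ, 1 ≤ n →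
          ∫ t in (0:ℝ)..T, f t * Complex.exp (-(l n * t)) = c n / l n := by
  rintro ⟨T, f, -, hf, -, hmoment⟩
  obtain ⟨k, hk, hck⟩ := heven
  set F : ℂ → ℂ := fun z => ∫ t in (0:ℝ)..T, f t * Complex.exp (-(z * t))
  have hF : Differentiable ℂ F := differentiable_intervalIntegral_mul_cexp_neg_mul
    (((hf.locallyIntegrable one_le_two).integrableOn_isCompact isCompact_uIcc).intervalIntegrable)
  have hodd_inj : Injective fun n => l (2 * n + 1) := fun m n h => by
    have := hinj _ (by omega) _ (by omega) h
    omega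
  have hodd_lim : Tendsto (fun n => l (2 * n + 1)) atTop (𝓝 lstar) :=
    hlim.comp (StrictMono.tendsto_atTop fun m n h => by omega)
  have hF_moment : ∀ n, 1 ≤ n → F (l n) = c n / l n := hmoment
  have hF_zero : F = 0 := hF.eq_zero_of_tendsto_of_injective hodd_inj hodd_lim fun n => by
    rw [hF_moment _ (by omega), hodd, zero_div]
  have hF_even := congrFun hF_zero (l (2 * k))
  rw [hF_moment _ (by omega), Pi.zero_apply] at hF_even
  exact div_ne_zero hck (hne _ (by omega)) hF_even
end
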